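/- arXiv:2108.10636 — 3 statements merged into one kernel-verified Lean document; each statement's English description precedes it below -/
import Mathlib

section
/- For z ∈ ℝ^K, the Euclidean projection of z onto the simplex Δ^{K-1} = { μ ∈ ℝ^K : Σ_i μ_i = 1, μ_i ≥ 0 } is given componentwise by sparsemax_i(z) = max(z_i - τ(z), 0), where τ(z) is the unique real number satisfying Σ_i max(z_i - τ(z), 0) = 1. -/
/-!
`s = max (z - τ) 0` is the coordinatewise projection of `z - τ` onto the nonnegative orthant,
so `(z - τ - s) ⬝ (μ - s) ≤ 0` for every `μ ≥ 0`. When moreover `∑ μ = ∑ s`, the shift by `τ`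
cancels, giving the obtuse-angle condition `(z - s) ⬝ (μ - s) ≤ 0` that characterises `s` as the
projection of `z` onto the simplex; expanding `‖μ - z‖²` around `s` then makes it the strict minimizer.
-/

open Finset

theorem sub_max_zero_mul_sub_max_zero_nonpos (y m : ℝ) (hm : 0 ≤ m) :
    (y - max y 0) * (m - max y 0) ≤ 0 := by
  rcases le_total 0 y with hy | hy
  · simp [max_eq_left hy]
  · rw [max_eq_right hy]
    nlinarith

section Projection

variable {ι : Type*} [Fintype ι]

theorem sum_sq_sub_lt_of_inner_nonneg {s μ z : ι → ℝ}
    (hinner : 0 ≤ ∑ i, (s i - z i) * (μ i - s i)) (hne : μ ≠ s) :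
    ∑ i, (s i - z i) ^ 2 < ∑ i, (μ i - z i) ^ 2 := by
  obtain ⟨j, hj⟩ := Function.ne_iff.mp hne
  have hdist : 0 < ∑ i, (μ i - s i) ^ 2 :=
    sum_pos' (fun i _ => sq_nonneg _) ⟨j, mem_univ j, sq_pos_of_ne_zero (sub_ne_zero.mpr hj)⟩
  have hexpand : ∑ i, (μ i - z i) ^ 2 =
      ∑ i, (μ i - s i) ^ 2 + 2 * ∑ i, (s i - z i) * (μ i - s i) + ∑ i, (s i - z i) ^ 2 := by
    rw [mul_sum, ← sum_add_distrib, ← sum_add_distrib]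
    exact sum_congr rfl fun i _ => by ring
  linarith

theorem inner_max_sub_nonneg {z μ : ι → ℝ} (τ : ℝ) (hμ : ∀ i, 0 ≤ μ i)
    (hsum : ∑ i, μ i = ∑ i, max (z i - τ) 0) :
    0 ≤ ∑ i, (max (z i - τ) 0 - z i) * (μ i - max (z i - τ) 0) := by
  set s : ι → ℝ := fun i => max (z i - τ) 0
  have hshift : ∑ i, (s i - z i) * (μ i - s i)
      = -∑ i, (z i - τ - s i) * (μ i - s i) - τ * (∑ i, μ i - ∑ i, s i) := by
    rw [mul_sub, mul_sum, mul_sum, ← sum_neg_distrib, ← sum_sub_distrib, ← sum_sub_distrib]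
    exact sum_congr rfl fun i _ => by ring
  have hproj : ∑ i, (z i - τ - s i) * (μ i - s i) ≤ 0 :=
    sum_nonpos fun i _ => sub_max_zero_mul_sub_max_zero_nonpos (z i - τ) (μ i) (hμ i)
  rw [hshift, hsum, sub_self, mul_zero]
  linarith

end Projection

/-- For `z ∈ ℝ^K`, if `τ` satisfies `Σ_i max(z_i - τ, 0) = 1`, then
`sparsemax(z) = (max(z_i - τ, 0))_i` is the Euclidean projection of `z` onto
the probability simplex: it lies on the simplex and is the unique minimizer of
`‖μ - z‖²` over the simplex. -/
theorem stmt5 {K : ℕ} (z : Fin K → ℝ) (τ : ℝ)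
    (hτ : ∑ i, max (z i - τ) 0 = 1) :
    ((∑ i, max (z i - τ) 0 = 1) ∧ ∀ i, 0 ≤ max (z i - τ) 0) ∧
    (∀ μ : Fin K → ℝ, (∑ i, μ i = 1) → (∀ i, 0 ≤ μ i) →
      μ ≠ (fun i => max (z i - τ) 0) →
      ∑ i, (max (z i - τ) 0 - z i) ^ 2 < ∑ i, (μ i - z i) ^ 2) := by
  refine ⟨⟨hτ, fun i => le_max_right _ _⟩, fun μ hsum hμ hne => ?_⟩
  exact sum_sq_sub_lt_of_inner_nonneg (inner_max_sub_nonneg τ hμ (hsum.trans hτ.symm)) hne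
end

section
/- For any z ∈ ℝ^K, there exists a unique τ ∈ ℝ such that Σ_{i=1}^K max(z_i - τ, 0) = 1. -/
/-!
The map `τ ↦ ∑ i, max (z i - τ) 0` is continuous, is at least `c` at `τ = z i - c`, and vanishes
once `τ` exceeds every `z i`; the intermediate value theorem gives a solution of `… = c` for
`c ≥ 0`. For `c > 0` it is unique, because the map is strictly decreasing wherever it is positive:
some term `z i - τ` is then positive and strictly decreases.
-/

open Finset

namespace SumPosPart

variable {ι : Type*} [Fintype ι] (z : ι → ℝ)

noncomputable def sumPosPart (τ : ℝ) : ℝ := ∑ i, max (z i - τ) 0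

theorem continuous_sumPosPart : Continuous (sumPosPart z) :=
  continuous_finsetSum _ fun _ _ => (continuous_const.sub continuous_id).max continuous_const

theorem sumPosPart_lt_of_lt {a b : ℝ} (hab : a < b) (hb : 0 < sumPosPart z b) :
    sumPosPart z b < sumPosPart z a := by
  obtain ⟨i, -, hi⟩ : ∃ i ∈ univ, (0 : ℝ) < max (z i - b) 0 :=
    exists_lt_of_sum_lt (by simpa [sumPosPart] using hb)
  have hib : 0 < z i - b := by simpa using hi
  refine sum_lt_sum (fun j _ => max_le_max (by linarith) le_rfl) ⟨i, mem_univ i, ?_⟩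
  rw [max_eq_left hib.le, max_eq_left (by linarith)]
  linarith

theorem strictAntiOn_sumPosPart : StrictAntiOn (sumPosPart z) {τ | 0 < sumPosPart z τ} :=
  fun _ _ _ hb hab => sumPosPart_lt_of_lt z hab hb

theorem le_sumPosPart_sub (i : ι) {c : ℝ} (hc : 0 ≤ c) : c ≤ sumPosPart z (z i - c) :=
  calc c = max (z i - (z i - c)) 0 := by simp [hc]
    _ ≤ sumPosPart z (z i - c) :=
      single_le_sum (f := fun j => max (z j - (z i - c)) 0) (fun _ _ => le_max_right _ _)
        (mem_univ i)

theorem sumPosPart_eq_zero_of_forall_le {τ : ℝ} (h : ∀ i, z i ≤ τ) : sumPosPart z τ = 0 :=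
  sum_eq_zero fun i _ => max_eq_right (by linarith [h i])

theorem exists_sumPosPart_eq [Nonempty ι] {c : ℝ} (hc : 0 ≤ c) : ∃ τ, sumPosPart z τ = c := by
  obtain ⟨i⟩ := ‹Nonempty ι›
  obtain ⟨M, hM⟩ := (Set.finite_range z).bddAbove
  have hzero : sumPosPart z M = 0 :=
    sumPosPart_eq_zero_of_forall_le z fun j => hM (Set.mem_range_self j)
  exact intermediate_value_univ M (z i - c) (continuous_sumPosPart z)
    ⟨hzero ▸ hc, le_sumPosPart_sub z i hc⟩

theorem existsUnique_sumPosPart_eq [Nonempty ι] {c : ℝ} (hc : 0 < c) :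
    ∃! τ, sumPosPart z τ = c := by
  obtain ⟨τ, hτ⟩ := exists_sumPosPart_eq z hc.le
  refine ⟨τ, hτ, fun σ hσ => (strictAntiOn_sumPosPart z).injOn ?_ ?_ (hσ.trans hτ.symm)⟩
  · simpa [hσ] using hc
  · simpa [hτ] using hc

end SumPosPart

/-- For any `z ∈ ℝ^K` (with `K ≥ 1`), there exists a unique `τ ∈ ℝ` such that
`Σ_{i=1}^K max(z_i - τ, 0) = 1`. -/
theorem stmt6 {K : ℕ} (hK : 0 < K) (z : Fin K → ℝ) :
    ∃! τ : ℝ, ∑ i, max (z i - τ) 0 = 1 := by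
  have : Nonempty (Fin K) := Fin.pos_iff_nonempty.mp hK
  exact SumPosPart.existsUnique_sumPosPart_eq z one_pos
end

section
/- Sorting z so that z_{(1)} ≥ z_{(2)} ≥ ... ≥ z_{(K)}, let k(z) = max { k ∈ [K] : 1 + k z_{(k)} > Σ_{j ≤ k} z_{(j)} } and τ(z) = ( Σ_{j ≤ k(z)} z_{(j)} - 1 ) / k(z). Then the vector with components max(z_i - τ(z), 0) lies on the simplex, i.e., Σ_i max(z_i - τ(z), 0) = 1 and each component is nonnegative. -/
/-!
Let `a = z ∘ σ` be the sorted vector and `k = k(z)`. The defining inequality at `k` says exactly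
that `τ < a k`, so by monotonicity `τ < a j` for `j ≤ k`; its failure at `k + 1` says exactly that
`a (k + 1) ≤ τ`, so `a j ≤ τ` for `j > k`. Hence the support of `max (z - τ) 0` is `{σ j | j ≤ k}`,
and on it the entries sum to `Σ_{j ≤ k} a j - (k + 1) τ = 1` by the choice of `τ`.
-/

open Finset

section Threshold

variable {K : ℕ} (a : Fin K → ℝ)

/-- `k` is 0-based: for sorted `a` the sum runs over the `k + 1` largest entries. -/
noncomputable def sparsemaxThreshold (k : Fin K) : ℝ :=
  (∑ j ∈ Iic k, a j - 1) / ((k : ℕ) + 1)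

theorem sparsemaxThreshold_lt_iff (k : Fin K) :
    sparsemaxThreshold a k < a k ↔ ∑ j ∈ Iic k, a j < 1 + ((k : ℕ) + 1 : ℝ) * a k := by
  rw [sparsemaxThreshold, div_lt_iff₀ (by positivity)]
  constructor <;> intro h <;> linarith

theorem le_sparsemaxThreshold_iff {k k' : Fin K} (hk' : (k' : ℕ) = k + 1) :
    a k' ≤ sparsemaxThreshold a k ↔ 1 + ((k' : ℕ) + 1 : ℝ) * a k' ≤ ∑ j ∈ Iic k', a j := by
  have hIio : Iio k' = Iic k := by
    ext j
    simp only [mem_Iio, mem_Iic, Fin.lt_def, Fin.le_def]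
    omega
  rw [sparsemaxThreshold, le_div_iff₀ (by positivity), Iic_eq_cons_Iio k', sum_cons, hIio, hk']
  push_cast
  constructor <;> intro h <;> linarith

variable {a}

theorem sparsemaxThreshold_lt_iff_le (ha : Antitone a) {kz : Fin K}
    (hmem : ∑ j ∈ Iic kz, a j < 1 + ((kz : ℕ) + 1 : ℝ) * a kz)
    (hmax : ∀ k : Fin K, ∑ j ∈ Iic k, a j < 1 + ((k : ℕ) + 1 : ℝ) * a k → k ≤ kz) (j : Fin K) :
    sparsemaxThreshold a kz < a j ↔ j ≤ kz := by
  refine ⟨fun hj => ?_, fun hj => ((sparsemaxThreshold_lt_iff a kz).2 hmem).trans_le (ha hj)⟩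
  by_contra! hlt
  have hsucc : (kz : ℕ) + 1 < K := by have := j.isLt; omega
  let k' : Fin K := ⟨kz + 1, hsucc⟩
  have hk'j : k' ≤ j := Fin.le_def.2 hlt
  have hfail : a k' ≤ sparsemaxThreshold a kz :=
    (le_sparsemaxThreshold_iff a rfl).2 <| not_lt.1 fun h => by
      have := Fin.le_def.1 (hmax k' h)
      simp [k'] at this
  exact (ha hk'j).trans hfail |>.not_gt hj

end Threshold

theorem sum_max_sub_eq_sum_sub_card_mul {ι : Type*} [Fintype ι] (s : Finset ι) (f : ι → ℝ)
    (τ : ℝ) (hs : ∀ j, τ < f j ↔ j ∈ s) :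
    ∑ j, max (f j - τ) 0 = ∑ j ∈ s, f j - #s * τ := by
  classical
  rw [← sum_add_sum_compl s]
  have hin : ∑ j ∈ s, max (f j - τ) 0 = ∑ j ∈ s, (f j - τ) :=
    sum_congr rfl fun j hj => max_eq_left (sub_nonneg.2 ((hs j).2 hj).le)
  have hout : ∑ j ∈ sᶜ, max (f j - τ) 0 = 0 :=
    sum_eq_zero fun j hj =>
      max_eq_right (sub_nonpos.2 (not_lt.1 fun h => (mem_compl.1 hj) ((hs j).1 h)))
  rw [hin, hout, sum_sub_distrib, sum_const, nsmul_eq_mul, add_zero]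

theorem stmt7_general {K : ℕ} (z : Fin K → ℝ)
    (σ : Equiv.Perm (Fin K)) (hsort : Antitone (fun j => z (σ j)))
    (kz : Fin K)
    (hmem : 1 + ((kz : ℕ) + 1 : ℝ) * z (σ kz) > ∑ j ∈ Finset.Iic kz, z (σ j))
    (hmax : ∀ k : Fin K,
      1 + ((k : ℕ) + 1 : ℝ) * z (σ k) > (∑ j ∈ Finset.Iic k, z (σ j)) → k ≤ kz) :
    (∑ i, max (z i - ((∑ j ∈ Finset.Iic kz, z (σ j)) - 1) / ((kz : ℕ) + 1)) 0 = 1) ∧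
    ∀ i, 0 ≤ max (z i - ((∑ j ∈ Finset.Iic kz, z (σ j)) - 1) / ((kz : ℕ) + 1)) 0 := by
  have hsupport := sparsemaxThreshold_lt_iff_le hsort hmem hmax
  refine ⟨?_, fun i => le_max_right _ _⟩
  rw [← Equiv.sum_comp σ]
  change ∑ j, max (z (σ j) - sparsemaxThreshold (fun j => z (σ j)) kz) 0 = 1
  rw [sum_max_sub_eq_sum_sub_card_mul (Iic kz) _ _ (fun j => (hsupport j).trans mem_Iic.symm),
    sparsemaxThreshold, Fin.card_Iic]
  push_cast
  field_simp
  ring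

/-- Closed form of the sparsemax threshold: sorting `z` in decreasing order via
a permutation `σ`, with `k(z)` the largest index `k` (0-based, counting `k+1`
coordinates) such that `1 + (k+1) z_{(k)} > Σ_{j ≤ k} z_{(j)}`, and
`τ(z) = (Σ_{j ≤ k(z)} z_{(j)} - 1) / (k(z)+1)`, the vector with components
`max(z_i - τ(z), 0)` lies on the probability simplex. -/
theorem stmt7 {K : ℕ} (hK : 0 < K) (z : Fin K → ℝ)
    (σ : Equiv.Perm (Fin K)) (hsort : Antitone (fun j => z (σ j)))
    (kz : Fin K)
    (hmem : 1 + ((kz : ℕ) + 1 : ℝ) * z (σ kz) > ∑ j ∈ Finset.Iic kz, z (σ j))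
    (hmax : ∀ k : Fin K,
      1 + ((k : ℕ) + 1 : ℝ) * z (σ k) > (∑ j ∈ Finset.Iic k, z (σ j)) → k ≤ kz) :
    (∑ i, max (z i - ((∑ j ∈ Finset.Iic kz, z (σ j)) - 1) / ((kz : ℕ) + 1)) 0 = 1) ∧
    ∀ i, 0 ≤ max (z i - ((∑ j ∈ Finset.Iic kz, z (σ j)) - 1) / ((kz : ℕ) + 1)) 0 :=
  stmt7_general z σ hsort kz hmem hmax
end
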